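/- Let G be a 3-γₜ-edge-critical graph of diameter two with a vertex cut {x, y, z} of size three, and suppose every vertex of {x,y,z} having a non-neighbor in one component of G − {x,y,z} dominates every other component. If v and v' are two vertices in the same component of G − {x,y,z} that are each adjacent to all of x, y, z, then v and v' are adjacent. -/

import Mathlib

/-- The total domination number of a graph, as an extended natural number
(`⊤` when no total dominating set exists). -/
noncomputable def gammaT {V : Type*} (G : SimpleGraph V) : ℕ∞ :=
  sInf {n : ℕ∞ | ∃ S : Finset V, (S.card : ℕ∞) = n ∧ ∀ v : V, ∃ u ∈ S, G.Adj v u}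

/-- G has diameter two. -/
def DiamTwo {V : Type*} (G : SimpleGraph V) : Prop :=
  (∀ u v : V, u ≠ v → G.Adj u v ∨ ∃ w : V, G.Adj u w ∧ G.Adj w v) ∧
    ∃ u v : V, u ≠ v ∧ ¬ G.Adj u v

/-- Removing the vertex set S disconnects G. -/
def RemovalDisconnects {V : Type*} (G : SimpleGraph V) (S : Set V) : Prop :=
  ∃ a b : (Sᶜ : Set V), ¬ (G.induce Sᶜ).Reachable a b

/-- G is 3-γₜ-edge-critical. -/
def Critical3 {V : Type*} [DecidableEq V] (G : SimpleGraph V) : Prop :=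
  gammaT G = 3 ∧
    ∀ u v : V, u ≠ v → ¬ G.Adj u v →
      gammaT (G ⊔ SimpleGraph.fromEdgeSet {s(u, v)}) = 2

/-!
Suppose `v` and `v'` are not adjacent. By criticality `G + vv'` has a total dominating set `S`
of size two, which cannot totally dominate `G`; so one of `v, v'`, say `v'`, lies in `S` and the
other, `v`, has no `G`-neighbour in `S`. Write `S = {v', b}` and pick `c` in a component of
`G - {x, y, z}` other than that of `v` and `v'`. Since `v` dominates the cut, `b` lies outside it;
`c` must be dominated by `b`, and `v'` must be dominated by `b` too, so `v'` and `c` lie in the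
same component, a contradiction.
-/

open SimpleGraph

section

variable {V : Type*}

def IsTotalDominatingSet (G : SimpleGraph V) (S : Finset V) : Prop :=
  ∀ v : V, ∃ u ∈ S, G.Adj v u

lemma gammaT_le_card {G : SimpleGraph V} {S : Finset V} (h : IsTotalDominatingSet G S) :
    gammaT G ≤ S.card :=
  sInf_le ⟨S, rfl, h⟩

lemma not_isTotalDominatingSet_of_card_lt {G : SimpleGraph V} {S : Finset V}
    (h : (S.card : ℕ∞) < gammaT G) : ¬ IsTotalDominatingSet G S :=
  fun hS => (gammaT_le_card hS).not_gt h

lemma exists_isTotalDominatingSet_of_gammaT_eq {G : SimpleGraph V} {n : ℕ}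
    (h : gammaT G = n) : ∃ S : Finset V, S.card = n ∧ IsTotalDominatingSet G S := by
  have hne : {m : ℕ∞ | ∃ S : Finset V, (S.card : ℕ∞) = m ∧ IsTotalDominatingSet G S}.Nonempty := by
    by_contra hempty
    have hgammaT : gammaT G = sInf {m : ℕ∞ | ∃ S : Finset V, (S.card : ℕ∞) = m ∧
        IsTotalDominatingSet G S} := rfl
    rw [hgammaT, Set.not_nonempty_iff_eq_empty.mp hempty, sInf_empty] at h
    exact ENat.top_ne_natCast n h
  obtain ⟨S, hS, hdom⟩ : ∃ S : Finset V, (S.card : ℕ∞) = n ∧ IsTotalDominatingSet G S :=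
    h ▸ csInf_mem hne
  exact ⟨S, by exact_mod_cast hS, hdom⟩

lemma adj_of_sup_edge_adj {G : SimpleGraph V} {s t a b : V} (h : (G ⊔ edge s t).Adj a b)
    (hne : s(a, b) ≠ s(s, t)) : G.Adj a b := by
  rcases h with h | h
  · exact h
  · exact absurd (((adj_edge s t).mp h).1.symm) hne

lemma IsTotalDominatingSet.of_sup_edge {G : SimpleGraph V} {v v' : V} {S : Finset V}
    (h : IsTotalDominatingSet (G ⊔ edge v v') S) (hG : ¬ IsTotalDominatingSet G S) :
    (v' ∈ S ∧ ∀ u ∈ S, ¬ G.Adj v u) ∨ (v ∈ S ∧ ∀ u ∈ S, ¬ G.Adj v' u) := by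
  unfold IsTotalDominatingSet at hG
  push Not at hG
  obtain ⟨w, hw⟩ := hG
  obtain ⟨u, hu, hwu⟩ := h w
  rcases hwu with hwu | hwu
  · exact absurd hwu (hw u hu)
  · rcases (edge_adj v v' w u).mp hwu with ⟨⟨rfl, rfl⟩ | ⟨rfl, rfl⟩, -⟩
    · exact .inl ⟨hu, hw⟩
    · exact .inr ⟨hu, hw⟩

namespace Critical3

variable [DecidableEq V] {G : SimpleGraph V}

lemma not_isTotalDominatingSet_of_card_eq_two (hG : Critical3 G) {S : Finset V}
    (hS : S.card = 2) : ¬ IsTotalDominatingSet G S :=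
  not_isTotalDominatingSet_of_card_lt (by rw [hS, hG.1]; decide)

lemma exists_isTotalDominatingSet_sup_edge (hG : Critical3 G) {v v' : V} (hne : v ≠ v')
    (hadj : ¬ G.Adj v v') :
    ∃ S : Finset V, S.card = 2 ∧ IsTotalDominatingSet (G ⊔ edge v v') S :=
  exists_isTotalDominatingSet_of_gammaT_eq (hG.2 v v' hne hadj)

end Critical3

lemma RemovalDisconnects.exists_not_reachable {G : SimpleGraph V} {K : Set V}
    (h : RemovalDisconnects G K) (p : ↥Kᶜ) : ∃ q, ¬ (G.induce Kᶜ).Reachable p q := by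
  obtain ⟨a, b, hab⟩ := h
  by_contra! hp
  exact hab ((hp a).symm.trans (hp b))

lemma reachable_induce_of_adj {G : SimpleGraph V} {K : Set V} {p q : V} (hp : p ∈ K)
    (hq : q ∈ K) (h : G.Adj p q) : (G.induce K).Reachable ⟨p, hp⟩ ⟨q, hq⟩ :=
  Adj.reachable (G := G.induce K) h

lemma Finset.exists_eq_pair_of_card_eq_two [DecidableEq V] {S : Finset V} {a : V}
    (hS : S.card = 2) (ha : a ∈ S) : ∃ b, S = {a, b} := by
  obtain ⟨b, hb⟩ := Finset.card_eq_one.mp (by rw [Finset.card_erase_of_mem ha, hS])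
  exact ⟨b, by rw [← Finset.insert_erase ha, hb]⟩

lemma reachable_of_isTotalDominatingSet_sup_edge [DecidableEq V] {G : SimpleGraph V}
    {K : Set V} {v v' c : V} (hv : v ∈ Kᶜ) (hv' : v' ∈ Kᶜ) (hc : c ∈ Kᶜ)
    (hvK : ∀ s ∈ K, G.Adj v s) (hvc : ¬ (G.induce Kᶜ).Reachable ⟨v, hv⟩ ⟨c, hc⟩)
    {S : Finset V} (hS : S.card = 2) (hSdom : IsTotalDominatingSet (G ⊔ edge v v') S)
    (hv'S : v' ∈ S) (hvS : ∀ u ∈ S, ¬ G.Adj v u) :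
    (G.induce Kᶜ).Reachable ⟨v', hv'⟩ ⟨c, hc⟩ := by
  by_contra hv'c
  obtain ⟨b, rfl⟩ := Finset.exists_eq_pair_of_card_eq_two hS hv'S
  have hbK : b ∈ Kᶜ := fun hb => hvS b (by simp) (hvK b hb)
  have hcv : c ≠ v := by rintro rfl; exact hvc .rfl
  have hcv' : c ≠ v' := by rintro rfl; exact hv'c .rfl
  have hcb : G.Adj c b := by
    obtain ⟨u, hu, hcu⟩ := hSdom c
    have hcu := adj_of_sup_edge_adj hcu (by simp [hcv, hcv'])
    rw [Finset.mem_insert, Finset.mem_singleton] at hu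
    rcases hu with hu | hu <;> subst u
    · exact absurd (reachable_induce_of_adj hc hv' hcu).symm hv'c
    · exact hcu
  have hbv : b ≠ v := by
    rintro rfl; exact hvc (reachable_induce_of_adj hc hv hcb).symm
  have hv'b : G.Adj v' b := by
    obtain ⟨u, hu, hv'u⟩ := hSdom v'
    rw [Finset.mem_insert, Finset.mem_singleton] at hu
    rcases hu with hu | hu <;> subst u
    · exact absurd hv'u (SimpleGraph.irrefl _)
    · exact adj_of_sup_edge_adj hv'u (by rw [Ne, Sym2.eq_iff]; grind)
  exact hv'c ((reachable_induce_of_adj hv' hbK hv'b).trans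
    (reachable_induce_of_adj hc hbK hcb).symm)

end

theorem stmt14_general {V : Type*} [DecidableEq V] (G : SimpleGraph V)
    (hcrit : Critical3 G)
    (x y z : V)
    (hcut : RemovalDisconnects G {x, y, z}) :
    ∀ (v v' : V) (hv : v ∈ (({x, y, z} : Set V)ᶜ))
      (hv' : v' ∈ (({x, y, z} : Set V)ᶜ)), v ≠ v' →
      G.Adj v x → G.Adj v y → G.Adj v z →
      G.Adj v' x → G.Adj v' y → G.Adj v' z →
      (G.induce (({x, y, z} : Set V)ᶜ)).Reachable ⟨v, hv⟩ ⟨v', hv'⟩ →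
      G.Adj v v' := by
  intro v v' hv hv' hne hvx hvy hvz hv'x hv'y hv'z hreach
  by_contra hvv'
  obtain ⟨S, hS, hSdom⟩ := hcrit.exists_isTotalDominatingSet_sup_edge hne hvv'
  obtain ⟨⟨c, hc⟩, hvc⟩ := hcut.exists_not_reachable ⟨v, hv⟩
  have hv'c : ¬ (G.induce ({x, y, z} : Set V)ᶜ).Reachable ⟨v', hv'⟩ ⟨c, hc⟩ :=
    fun h => hvc (hreach.trans h)
  rcases hSdom.of_sup_edge (hcrit.not_isTotalDominatingSet_of_card_eq_two hS) with
    ⟨hv'S, hvS⟩ | ⟨hvS, hv'S⟩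
  · exact hv'c (reachable_of_isTotalDominatingSet_sup_edge hv hv' hc
      (by simp [hvx, hvy, hvz]) hvc hS hSdom hv'S hvS)
  · exact hvc (reachable_of_isTotalDominatingSet_sup_edge hv' hv hc
      (by simp [hv'x, hv'y, hv'z]) hv'c hS (edge_comm v v' ▸ hSdom) hvS hv'S)

/-- In a 3-γₜ-edge-critical diameter-two graph with a
three-vertex cut {x,y,z} such that every vertex of {x,y,z} with a
non-neighbor in one component dominates every other component, any two
vertices of a common component of G - {x,y,z} each adjacent to all of
x, y, z are adjacent. -/
theorem stmt14 {V : Type*} [DecidableEq V] (G : SimpleGraph V)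
    (hcrit : Critical3 G) (hconn : G.Connected) (hdiam : DiamTwo G)
    (x y z : V) (hxy : x ≠ y) (hxz : x ≠ z) (hyz : y ≠ z)
    (hcut : RemovalDisconnects G {x, y, z})
    (hdom : ∀ s ∈ ({x, y, z} : Set V),
      ∀ (a : V) (ha : a ∈ (({x, y, z} : Set V)ᶜ)), ¬ G.Adj s a →
      ∀ (b : V) (hb : b ∈ (({x, y, z} : Set V)ᶜ)),
        ¬ (G.induce (({x, y, z} : Set V)ᶜ)).Reachable ⟨a, ha⟩ ⟨b, hb⟩ →
        G.Adj s b) :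
    ∀ (v v' : V) (hv : v ∈ (({x, y, z} : Set V)ᶜ))
      (hv' : v' ∈ (({x, y, z} : Set V)ᶜ)), v ≠ v' →
      G.Adj v x → G.Adj v y → G.Adj v z →
      G.Adj v' x → G.Adj v' y → G.Adj v' z →
      (G.induce (({x, y, z} : Set V)ᶜ)).Reachable ⟨v, hv⟩ ⟨v', hv'⟩ →
      G.Adj v v' :=
  stmt14_general G hcrit x y z hcut
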